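/- Single-round stability of RandLMSPar: let G_a and G_b be leveled straight-line grammars over the same terminal alphabet Σ using the same fingerprint family H, with memoized fingerprints F_a and F_b. Let T_a be a string over the symbols of G_a and T_b a string over the symbols of G_b, and suppose there are intervals [a..b] in T_a and [a'..b'] in T_b of equal length d = b−a = b'−a' such that for every offset 0 ≤ u ≤ d the parse trees of T_a[a+u] and T_b[a'+u] have identical topology and identical leaf strings. Then for every offset t with 1 ≤ t ≤ d such that there exists an index j with a+t ≤ j < b and F_a[T_a[j]] ≠ F_a[T_a[j+1]], position a+t is a RandLMSPar break of T_a if and only if position a'+t is a RandLMSPar break of T_b. -/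

import Mathlib

/-- Position `ℓ` of the string `T[1..n]` is L-type (Nong et al.'s classification):
`T[ℓ] > T[ℓ+1]`, or `T[ℓ] = T[ℓ+1]` and `ℓ+1` is L-type. -/
def isLType {α : Type*} [LinearOrder α] (T : ℕ → α) (n ℓ : ℕ) : Prop :=
  if _h : ℓ < n then
    T (ℓ + 1) < T ℓ ∨ (T ℓ = T (ℓ + 1) ∧ isLType T n (ℓ + 1))
  else False
termination_by n - ℓ
decreasing_by omega

/-- Position `ℓ` of the string `T[1..n]` is S-type:
`T[ℓ] < T[ℓ+1]`, or `T[ℓ] = T[ℓ+1]` and `ℓ+1` is S-type. -/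
def isSType {α : Type*} [LinearOrder α] (T : ℕ → α) (n ℓ : ℕ) : Prop :=
  if _h : ℓ < n then
    T ℓ < T (ℓ + 1) ∨ (T ℓ = T (ℓ + 1) ∧ isSType T n (ℓ + 1))
  else False
termination_by n - ℓ
decreasing_by omega

/-- Position `ℓ` lies in the maximal equal-symbol run suffix of `T[1..n]`. -/
def inRunSuffix {α : Type*} (T : ℕ → α) (n ℓ : ℕ) : Prop :=
  ∀ i, ℓ ≤ i → i < n → T i = T (i + 1)

/-- Position `ℓ` of `T[1..n]` is LMS-type: `ℓ ≥ 2`, `ℓ` is S-type and `ℓ-1` is L-type. -/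
def isLMS {α : Type*} [LinearOrder α] (T : ℕ → α) (n ℓ : ℕ) : Prop :=
  2 ≤ ℓ ∧ isSType T n ℓ ∧ isLType T n (ℓ - 1)

/-- The level of a grammar symbol: terminals have level 0, a nonterminal `X` has
level `level X`. -/
def symLevelAux {α N : Type*} (level : N → ℕ) : α ⊕ N → ℕ
  | .inl _ => 0
  | .inr Y => level Y

/-- A leveled straight-line grammar over the terminal alphabet `α` with nonterminals `N`:
every nonterminal `X` has level ≥ 1 and exactly one rule `X → rhs X`, whose right-hand
side is nonempty and consists of symbols of level `level X - 1` (terminals = level 0). -/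
structure LeveledSLG (α : Type*) (N : Type*) where
  level : N → ℕ
  rhs : N → List (α ⊕ N)
  level_pos : ∀ X, 1 ≤ level X
  rhs_ne : ∀ X, rhs X ≠ []
  rhs_level : ∀ X, ∀ s ∈ rhs X, symLevelAux level s = level X - 1

namespace LeveledSLG

variable {α N : Type*}

/-- Level of a symbol of the grammar `G`. -/
def symLevel (G : LeveledSLG α N) (s : α ⊕ N) : ℕ := symLevelAux G.level s

theorem symLevel_lt_of_mem_rhs (G : LeveledSLG α N) {X : N} {s : α ⊕ N}
    (h : s ∈ G.rhs X) : G.symLevel s < G.symLevel (Sum.inr X) := by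
  have h1 := G.rhs_level X s h
  have h2 := G.level_pos X
  simp only [symLevel, symLevelAux] at h1 ⊢
  omega

/-- The expansion of a grammar symbol: `exp(s) = s` for a terminal `s`, and
`exp(X) = exp(Q[1])⋯exp(Q[q])` for a nonterminal `X → Q[1..q]`. -/
def expSym (G : LeveledSLG α N) : α ⊕ N → List α
  | .inl s => [s]
  | .inr X => ((G.rhs X).attach).flatMap (fun s => G.expSym s.1)
termination_by s => G.symLevel s
decreasing_by exact G.symLevel_lt_of_mem_rhs s.2

end LeveledSLG

/-- Ordered rooted trees with `β`-labelled leaves. -/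
inductive RTree (β : Type*) where
  | leaf : β → RTree β
  | node : List (RTree β) → RTree β

namespace LeveledSLG

/-- The parse tree `PT(s)` of a grammar symbol: a terminal is a leaf, and the parse
tree of a nonterminal `X → Q[1..q]` is a node with the subtrees `PT(Q[1]), …, PT(Q[q])`. -/
def parseTree {α N : Type*} (G : LeveledSLG α N) : α ⊕ N → RTree α
  | .inl s => .leaf s
  | .inr X => .node (((G.rhs X).attach).map (fun s => G.parseTree s.1))
termination_by s => G.symLevel s
decreasing_by exact G.symLevel_lt_of_mem_rhs s.2

end LeveledSLG
/-- A fingerprint family `H`: a base function `h0` on terminals and, for each level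
`i ≥ 1`, a prime `p i`, integers `a i, b i, c i ∈ [1..p i - 1]` and a range `m i ≥ 1`. -/
structure FPFamily (α : Type*) where
  h0 : α → ℕ
  p : ℕ → ℕ
  a : ℕ → ℕ
  b : ℕ → ℕ
  c : ℕ → ℕ
  m : ℕ → ℕ
  p_prime : ∀ i, 1 ≤ i → (p i).Prime
  a_mem : ∀ i, 1 ≤ i → 1 ≤ a i ∧ a i ≤ p i - 1
  b_mem : ∀ i, 1 ≤ i → 1 ≤ b i ∧ b i ≤ p i - 1
  c_mem : ∀ i, 1 ≤ i → 1 ≤ c i ∧ c i ≤ p i - 1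
  m_pos : ∀ i, 1 ≤ i → 1 ≤ m i

/-- `polyVal c [f₁, …, f_q] = Σ_{j=1}^{q} f_j · c^(j-1)`. -/
def polyVal (c : ℕ) : List ℕ → ℕ
  | [] => 0
  | f :: fs => f + c * polyVal c fs

/-- The fingerprint of an ordered rooted tree with `α`-labelled leaves, the second
argument being the level of the root: `fp(leaf s) = h0 s`, and the fingerprint of an
internal node at level `i` with children fingerprints `f₁, …, f_q` is
`((a i · Σ_j f_j · (c i)^(j-1) + b i) mod p i) mod m i`. -/
def fpTree {α : Type*} (H : FPFamily α) : RTree α → ℕ → ℕ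
  | .leaf s, _ => H.h0 s
  | .node ts, i =>
      ((H.a i * polyVal (H.c i) (ts.attach.map fun t => fpTree H t.1 (i - 1)) + H.b i)
          % H.p i) % H.m i
termination_by t _ => sizeOf t
decreasing_by
  have h := List.sizeOf_lt_of_mem t.2
  simp only [RTree.node.sizeOf_spec]
  omega

namespace LeveledSLG

/-- The memoized fingerprint of the grammar symbols: `F[s] = h0 s` for a terminal `s`
and, for a level-`i` nonterminal `X → Q[1..q]`,
`F[X] = ((a i · Σ_j F[Q[j]] · (c i)^(j-1) + b i) mod p i) mod m i`. -/
def memoF {α N : Type*} (G : LeveledSLG α N) (H : FPFamily α) : α ⊕ N → ℕ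
  | .inl s => H.h0 s
  | .inr X =>
      ((H.a (G.level X) * polyVal (H.c (G.level X))
            ((G.rhs X).attach.map fun s => G.memoF H s.1) +
          H.b (G.level X)) % H.p (G.level X)) % H.m (G.level X)
termination_by s => G.symLevel s
decreasing_by exact G.symLevel_lt_of_mem_rhs s.2

end LeveledSLG

/-!
The memoized fingerprint of a symbol is the tree fingerprint `fpTree` of its parse tree,
taken at the symbol's level, and that level is the depth of the parse tree; hence equal parse
trees carry equal fingerprints, and the two fingerprint sequences coincide on the windows
`[a..b]` and `[a'..b']`. The S/L type of a position is decided by the first change of the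
sequence at or after it, so once a change occurs inside the window, the types of `a + t - 1`
and `a + t`, and with them the break property, are read off the common window.
-/

section Types

variable {β : Type*} [LinearOrder β] {T T' : ℕ → β} {n n' : ℕ}

theorem isSType_iff_of_lt {ℓ : ℕ} (h : ℓ < n) :
    isSType T n ℓ ↔ T ℓ < T (ℓ + 1) ∨ T ℓ = T (ℓ + 1) ∧ isSType T n (ℓ + 1) := by
  rw [isSType, dif_pos h]

theorem isLType_iff_isSType_toDual (T : ℕ → β) (n ℓ : ℕ) :
    isLType T n ℓ ↔ isSType (OrderDual.toDual ∘ T) n ℓ := by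
  rw [isLType, isSType]
  split_ifs
  · simp only [Function.comp_apply, OrderDual.toDual_lt_toDual, OrderDual.toDual_inj,
      isLType_iff_isSType_toDual T n (ℓ + 1)]
  · rfl
termination_by n - ℓ

theorem isSType_congr {k ℓ ℓ' : ℕ} (hagree : ∀ u ≤ k + 1, T (ℓ + u) = T' (ℓ' + u))
    (hne : T (ℓ + k) ≠ T (ℓ + k + 1)) (hn : ℓ + k < n) (hn' : ℓ' + k < n') :
    isSType T n ℓ ↔ isSType T' n' ℓ' := by
  have h0 : T ℓ = T' ℓ' := hagree 0 (by omega)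
  rw [isSType_iff_of_lt (by omega : ℓ < n), isSType_iff_of_lt (by omega : ℓ' < n'), ← h0,
    ← hagree 1 (by omega)]
  refine or_congr_right (and_congr_right fun hrun => ?_)
  cases k with
  | zero => exact absurd hrun hne
  | succ k =>
    refine isSType_congr (k := k) (ℓ := ℓ + 1) (ℓ' := ℓ' + 1) (fun u hu => ?_) ?_
      (by omega) (by omega)
    · simpa only [add_assoc, add_comm 1 u] using hagree (u + 1) (by omega)
    · simpa only [add_assoc, add_comm 1 k] using hne

theorem isLType_congr {k ℓ ℓ' : ℕ} (hagree : ∀ u ≤ k + 1, T (ℓ + u) = T' (ℓ' + u))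
    (hne : T (ℓ + k) ≠ T (ℓ + k + 1)) (hn : ℓ + k < n) (hn' : ℓ' + k < n') :
    isLType T n ℓ ↔ isLType T' n' ℓ' := by
  rw [isLType_iff_isSType_toDual, isLType_iff_isSType_toDual]
  exact isSType_congr (fun u hu => congrArg OrderDual.toDual (hagree u hu))
    (OrderDual.toDual.injective.ne hne) hn hn'

theorem isLMS_succ_congr {k ℓ ℓ' : ℕ} (hℓ : 1 ≤ ℓ) (hℓ' : 1 ≤ ℓ')
    (hagree : ∀ u ≤ k + 2, T (ℓ + u) = T' (ℓ' + u))
    (hne : T (ℓ + 1 + k) ≠ T (ℓ + 1 + k + 1)) (hn : ℓ + 1 + k < n)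
    (hn' : ℓ' + 1 + k < n') :
    isLMS T n (ℓ + 1) ↔ isLMS T' n' (ℓ' + 1) := by
  have hagree' : ∀ u ≤ k + 1, T (ℓ + 1 + u) = T' (ℓ' + 1 + u) := fun u hu => by
    simpa only [add_assoc, add_comm 1 u] using hagree (u + 1) (by omega)
  have hS : isSType T n (ℓ + 1) ↔ isSType T' n' (ℓ' + 1) := isSType_congr hagree' hne hn hn'
  have hL : isLType T n ℓ ↔ isLType T' n' ℓ' :=
    isLType_congr hagree (by simpa only [add_assoc, add_comm 1 k] using hne)
      (by omega) (by omega)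
  simp only [isLMS, Nat.add_sub_cancel, hS, hL, show 2 ≤ ℓ + 1 by omega,
    show 2 ≤ ℓ' + 1 by omega, true_and]

end Types

namespace RTree

variable {β : Type*}

def leftDepth : RTree β → ℕ
  | leaf _ => 0
  | node [] => 0
  | node (t :: _) => t.leftDepth + 1

end RTree

namespace LeveledSLG

variable {α N : Type*}

/-- All leaves of a parse tree lie at the depth given by the level of its root, so the
depth of the leftmost leaf recovers the level. -/
theorem leftDepth_parseTree (G : LeveledSLG α N) :
    ∀ s, (G.parseTree s).leftDepth = G.symLevel s
  | .inl _ => by rw [parseTree]; rfl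
  | .inr X => by
    obtain ⟨Y, Ys, hrhs⟩ := List.exists_cons_of_ne_nil (G.rhs_ne X)
    have hY : Y ∈ G.rhs X := hrhs ▸ List.mem_cons_self
    have hlevel := G.rhs_level X Y hY
    rw [parseTree, List.attach_map_val, hrhs, List.map_cons, RTree.leftDepth,
      leftDepth_parseTree G Y]
    have := G.level_pos X
    simp only [symLevel, symLevelAux] at hlevel ⊢
    omega
termination_by s => G.symLevel s
decreasing_by exact G.symLevel_lt_of_mem_rhs hY

theorem memoF_eq_fpTree (G : LeveledSLG α N) (H : FPFamily α) :
    ∀ s, G.memoF H s = fpTree H (G.parseTree s) (G.symLevel s)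
  | .inl _ => by rw [memoF, parseTree, fpTree]
  | .inr X => by
    have hchildren : (((G.rhs X).attach.map fun s => G.parseTree s.1).attach.map
        fun t => fpTree H t.1 (G.level X - 1)) =
        (G.rhs X).attach.map fun s => G.memoF H s.1 := by
      rw [List.attach_map_val, List.attach_map_val, List.attach_map_val
        (f := fun t => fpTree H t (G.level X - 1)), List.map_map]
      refine List.map_congr_left fun Y hY => ?_
      rw [Function.comp_apply, memoF_eq_fpTree G H Y]
      exact congrArg _ (G.rhs_level X Y hY).symm
    rw [memoF, parseTree, fpTree]
    exact congrArg (fun l => ((H.a (G.level X) * polyVal (H.c (G.level X)) l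
      + H.b (G.level X)) % H.p (G.level X)) % H.m (G.level X)) hchildren.symm
termination_by s => G.symLevel s
decreasing_by exact G.symLevel_lt_of_mem_rhs hY

theorem memoF_eq_of_parseTree_eq {Na Nb : Type*} (Ga : LeveledSLG α Na)
    (Gb : LeveledSLG α Nb) (H : FPFamily α) {s : α ⊕ Na} {s' : α ⊕ Nb}
    (h : Ga.parseTree s = Gb.parseTree s') : Ga.memoF H s = Gb.memoF H s' := by
  rw [memoF_eq_fpTree, memoF_eq_fpTree, ← leftDepth_parseTree, ← leftDepth_parseTree, h]

end LeveledSLG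

theorem stmt15_general {α Na Nb : Type*} (Ga : LeveledSLG α Na) (Gb : LeveledSLG α Nb)
    (H : FPFamily α) (Ta : ℕ → α ⊕ Na) (Tb : ℕ → α ⊕ Nb) (na nb a b a' b' : ℕ)
    (ha : 1 ≤ a) (hbn : b ≤ na)
    (ha' : 1 ≤ a') (hbn' : b' ≤ nb)
    (hlen : b - a = b' - a')
    (htree : ∀ u, u ≤ b - a → Ga.parseTree (Ta (a + u)) = Gb.parseTree (Tb (a' + u))) :
    ∀ t, 1 ≤ t → t ≤ b - a →
      (∃ j, a + t ≤ j ∧ j < b ∧ Ga.memoF H (Ta j) ≠ Ga.memoF H (Ta (j + 1))) →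
      (isLMS (fun ℓ => Ga.memoF H (Ta ℓ)) na (a + t) ↔
        isLMS (fun ℓ => Gb.memoF H (Tb ℓ)) nb (a' + t)) := by
  rintro t ht - ⟨j, hj, hjb, hchange⟩
  obtain ⟨s, rfl⟩ : ∃ s, t = s + 1 := ⟨t - 1, by omega⟩
  obtain ⟨k, rfl⟩ := Nat.exists_eq_add_of_le hj
  have hagree : ∀ u ≤ k + 2,
      Ga.memoF H (Ta (a + s + u)) = Gb.memoF H (Tb (a' + s + u)) := fun u hu => by
    simpa only [add_assoc] using
      LeveledSLG.memoF_eq_of_parseTree_eq Ga Gb H (htree (s + u) (by omega))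
  exact isLMS_succ_congr (T := fun ℓ => Ga.memoF H (Ta ℓ)) (ℓ := a + s) (ℓ' := a' + s)
    (by omega) (by omega) hagree hchange (by omega) (by omega)

/-- single-round stability of RandLMSPar. Let `G_a`, `G_b` be leveled
SLGs over the same terminal alphabet using the same fingerprint family `H`, and let
`T_a[1..na]`, `T_b[1..nb]` be strings over their respective symbols. RandLMSPar
classifies positions by applying Nong et al.'s types to the fingerprint sequences
`F_a[T_a[1..na]]`, `F_b[T_b[1..nb]]`; a break is an LMS-type position. If the intervals
`[a..b]` of `T_a` and `[a'..b']` of `T_b` have equal length and the parse trees of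
`T_a[a+u]` and `T_b[a'+u]` have identical topology and identical leaf strings for every
offset `0 ≤ u ≤ b-a`, then for every offset `1 ≤ t ≤ b-a` such that some `j` with
`a+t ≤ j < b` satisfies `F_a[T_a[j]] ≠ F_a[T_a[j+1]]`, position `a+t` is a RandLMSPar
break of `T_a` iff position `a'+t` is a RandLMSPar break of `T_b`. -/
theorem stmt15 {α Na Nb : Type*} (Ga : LeveledSLG α Na) (Gb : LeveledSLG α Nb)
    (H : FPFamily α) (Ta : ℕ → α ⊕ Na) (Tb : ℕ → α ⊕ Nb) (na nb a b a' b' : ℕ)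
    (ha : 1 ≤ a) (hab : a ≤ b) (hbn : b ≤ na)
    (ha' : 1 ≤ a') (hbn' : b' ≤ nb)
    (hlen : b - a = b' - a')
    (htree : ∀ u, u ≤ b - a → Ga.parseTree (Ta (a + u)) = Gb.parseTree (Tb (a' + u))) :
    ∀ t, 1 ≤ t → t ≤ b - a →
      (∃ j, a + t ≤ j ∧ j < b ∧ Ga.memoF H (Ta j) ≠ Ga.memoF H (Ta (j + 1))) →
      (isLMS (fun ℓ => Ga.memoF H (Ta ℓ)) na (a + t) ↔
        isLMS (fun ℓ => Gb.memoF H (Tb ℓ)) nb (a' + t)) :=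
  stmt15_general Ga Gb H Ta Tb na nb a b a' b' ha hbn ha' hbn' hlen htree
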